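/- arXiv:2512.03699 — 2 statements merged into one kernel-verified Lean document; each statement's English description precedes it below -/
import Mathlib

section
/- Let T : X → X be continuous on a metric space with a point z whose forward orbit is dense, and let f : X → ℝ be continuous. If u is defined on the forward orbit of z by u(T^n z) = Σ_{k=0}^{n-1} f(T^k z) and u is uniformly continuous (e.g. locally Hölder with uniform constants) on the orbit, then u extends uniquely to a continuous function û : X → ℝ satisfying û(Tx) − û(x) = f(x) for all x ∈ X. -/
/-- the Birkhoff-sum function along a dense forward orbit, if
uniformly continuous on the orbit, extends uniquely to a continuous solution of
the coboundary equation `û(Tx) − û(x) = f(x)`. -/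
theorem birkhoff_sum_extends {X : Type*} [MetricSpace X]
    (T : X → X) (hT : Continuous T) (z : X)
    (hz : Dense (Set.range fun n : ℕ => T^[n] z))
    (f : X → ℝ) (hf : Continuous f)
    (u : ℕ → ℝ) (hu : ∀ n, u n = ∑ k ∈ Finset.range n, f (T^[k] z))
    (hucont : ∀ ε > 0, ∃ δ > 0, ∀ n m : ℕ,
      dist (T^[n] z) (T^[m] z) < δ → |u n - u m| < ε) :
    ∃! uhat : X → ℝ, Continuous uhat ∧ (∀ n, uhat (T^[n] z) = u n) ∧
      ∀ x, uhat (T x) - uhat x = f x := by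
  classical
  -- well-definedness of `u` as a function on the orbit
  have hwd : ∀ n m : ℕ, T^[n] z = T^[m] z → u n = u m := by
    intro n m h
    by_contra hne
    obtain ⟨δ, hδ, h'⟩ := hucont |u n - u m| (abs_pos.2 (sub_ne_zero.2 hne))
    have := h' n m (by simp [h, hδ])
    exact lt_irrefl _ this
  set S : Set X := Set.range fun n : ℕ => T^[n] z with hSdef
  -- the function on the orbit as a subtype
  have hmem : ∀ x : S, ∃ n : ℕ, T^[n] z = x.1 := fun x => x.2
  let v : S → ℝ := fun x => u (hmem x).choose
  have hv : ∀ (n : ℕ) (h : T^[n] z ∈ S), v ⟨T^[n] z, h⟩ = u n := by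
    intro n h
    exact hwd _ _ (hmem ⟨T^[n] z, h⟩).choose_spec
  have hvuc : UniformContinuous v := by
    rw [Metric.uniformContinuous_iff]
    intro ε hε
    obtain ⟨δ, hδ, h'⟩ := hucont ε hε
    refine ⟨δ, hδ, fun {a b} hab => ?_⟩
    have ha := (hmem a).choose_spec
    have hb := (hmem b).choose_spec
    rw [Subtype.dist_eq, ← ha, ← hb] at hab
    simpa [Real.dist_eq] using h' _ _ hab
  have hdr : DenseRange ((↑) : S → X) := hz.denseRange_val
  have hui : IsUniformInducing ((↑) : S → X) :=
    isUniformEmbedding_subtype_val.isUniformInducing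
  have hdi : IsDenseInducing ((↑) : S → X) := hui.isDenseInducing hdr
  set uhat : X → ℝ := hdi.extend v with huhat
  have huc : Continuous uhat :=
    (uniformContinuous_uniformly_extend hui hdr hvuc).continuous
  have horb : ∀ n : ℕ, uhat (T^[n] z) = u n := by
    intro n
    have h : T^[n] z ∈ S := ⟨n, rfl⟩
    have := hdi.extend_eq hvuc.continuous ⟨T^[n] z, h⟩
    rw [huhat]
    simpa [hv n h] using this
  have hcob : ∀ x, uhat (T x) - uhat x = f x := by
    have : Set.EqOn (fun x => uhat (T x) - uhat x) f S := by
      rintro x ⟨n, rfl⟩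
      simp only
      rw [← Function.iterate_succ_apply' T n z, horb, horb,
        hu (n + 1), hu n, Finset.sum_range_succ]
      ring
    have := Continuous.ext_on hz (by fun_prop) hf this
    exact fun x => congrFun this x
  refine ⟨uhat, ⟨huc, horb, hcob⟩, ?_⟩
  rintro g ⟨hgc, hgorb, -⟩
  have : Set.EqOn g uhat S := by
    rintro x ⟨n, rfl⟩
    rw [hgorb, horb]
  exact Continuous.ext_on hz hgc huc this
end

section
/- Abelian Livšic theorem for subshifts: let T_ψ : Σ_A × Γ → Σ_A × Γ be a transitive skew product over a transitive subshift of finite type, with ψ depending only on the zeroth coordinate. If f : Σ_A → ℝ is θ-Hölder and f^n(x) = 0 whenever σ^n x = x and ψ_n(x) = e_Γ, then there exist a Hölder continuous u : Σ_A → ℝ and a group homomorphism α : Γ → ℝ such that f(x) = u(σx) − u(x) + α(ψ(x)) for all x ∈ Σ_A. -/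
/-!
Along the dense orbit of `z` under `T_ψ`, the Birkhoff sums `S_n` of `f` are almost constant on
near-returns: if `T_ψ^m z` and `T_ψ^n z` lie in the same fiber and agree on the block `[-N, N]`,
the return segment is shadowed by a periodic orbit with trivial cocycle, whose Birkhoff sum
vanishes, so `|S_n - S_m| = O(2^{-θN})`. Hence `S` extends to a function `V` on `Σ_A × Γ`,
Hölder along fibers, with `V ∘ T_ψ - V = f`. Right translation of the fibers by `δ` commutes with
`T_ψ`, so `V(x, γδ) - V(x, γ)` is `T_ψ`-invariant and therefore constant by density; this
constant is `α(δ)`, which is additive in `δ`, and `u = V(·, 1)`.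
-/

open Classical

/-- The two-sided subshift of finite type determined by a zero-one matrix `A`. -/
def SFT {k : ℕ} (A : Fin k → Fin k → Bool) : Type :=
  {x : ℤ → Fin k // ∀ n : ℤ, A (x n) (x (n + 1)) = true}

/-- The shift map `(σx)_n = x_{n+1}`. -/
def shift {k : ℕ} {A : Fin k → Fin k → Bool} (x : SFT A) : SFT A :=
  ⟨fun n => x.1 (n + 1), fun n => x.2 (n + 1)⟩

/-- `N(x,y) = sup{n ≥ 0 : x_i = y_i for all |i| < n}`. -/
noncomputable def sep {k : ℕ} {A : Fin k → Fin k → Bool} (x y : SFT A) : ℕ :=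
  sSup {n : ℕ | ∀ i : ℤ, |i| < (n : ℤ) → x.1 i = y.1 i}

/-- The metric `d(x,y) = 2^{-N(x,y)}`, with `d(x,x) = 0`. -/
noncomputable def dSFT {k : ℕ} {A : Fin k → Fin k → Bool} (x y : SFT A) : ℝ :=
  if x = y then 0 else (2 : ℝ) ^ (-(sep x y : ℤ))

/-- The skew product `T_ψ(x,γ) = (σx, ψ(x)γ)`. -/
def skewProd {X Γ : Type*} [Group Γ] (σ : X → X) (ψ : X → Γ) : X × Γ → X × Γ :=
  fun p => (σ p.1, ψ p.1 * p.2)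

/-- The cocycle `ψ_n(x) = ψ(σ^{n-1}x)···ψ(σx)ψ(x)`. -/
def coc {X M : Type*} [Monoid M] (σ : X → X) (ψ : X → M) : ℕ → X → M
  | 0, _ => 1
  | n + 1, x => ψ (σ^[n] x) * coc σ ψ n x

/-- The metric on `Σ_A × Γ`. -/
noncomputable def dHat {k : ℕ} {A : Fin k → Fin k → Bool} {Γ : Type*}
    (p q : SFT A × Γ) : ℝ :=
  if p.2 = q.2 then dSFT p.1 q.1 else 1

open Filter Topology Finset

theorem skewProd_iterate {X Γ : Type*} [Group Γ] (σ : X → X) (ψ : X → Γ) (n : ℕ) (p : X × Γ) :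
    (skewProd σ ψ)^[n] p = (σ^[n] p.1, coc σ ψ n p.1 * p.2) := by
  induction n with
  | zero => simp [coc]
  | succ n ih =>
    rw [Function.iterate_succ_apply', ih]
    simp only [skewProd, coc, Function.iterate_succ_apply', mul_assoc]

theorem birkhoffSum_skewProd_comp_fst {X Γ : Type*} [Group Γ] (σ : X → X) (ψ : X → Γ)
    (f : X → ℝ) (n : ℕ) (p : X × Γ) :
    birkhoffSum (skewProd σ ψ) (f ∘ Prod.fst) n p = birkhoffSum σ f n p.1 := by
  simp [birkhoffSum, skewProd_iterate]

theorem sum_range_pow_min_le {r : ℝ} (h0 : 0 ≤ r) (h1 : r < 1) (p : ℕ) :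
    ∑ j ∈ range p, r ^ min j (p - 1 - j) ≤ 2 / (1 - r) := by
  have hgeom : ∑ j ∈ range p, r ^ j ≤ 1 / (1 - r) := by
    have := geom_sum_Ico_le_of_lt_one (m := 0) (n := p) h0 h1
    rwa [← range_eq_Ico, pow_zero] at this
  calc ∑ j ∈ range p, r ^ min j (p - 1 - j)
      ≤ ∑ j ∈ range p, (r ^ j + r ^ (p - 1 - j)) := by
        refine sum_le_sum fun j _ => ?_
        rcases min_choice j (p - 1 - j) with h | h <;> rw [h] <;>
          linarith [pow_nonneg h0 j, pow_nonneg h0 (p - 1 - j)]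
    _ = ∑ j ∈ range p, r ^ j + ∑ j ∈ range p, r ^ j := by
        rw [sum_add_distrib, sum_range_reflect (fun j => r ^ j) p]
    _ ≤ 2 / (1 - r) := by linarith [show 2 / (1 - r) = 1 / (1 - r) + 1 / (1 - r) by ring]

section DenseOrbit

variable {X : Type*} {R : ℕ → X → X → Prop}

theorem exists_limit_along_dense_orbit (hR : ∀ N, Equivalence (R N)) (hanti : Antitone R)
    {orb : ℕ → X} (hdense : ∀ N q, ∃ n, R N (orb n) q) {S ε : ℕ → ℝ}
    (hε : Tendsto ε atTop (𝓝 0)) (hS : ∀ N m n, R N (orb m) (orb n) → |S m - S n| ≤ ε N) :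
    ∃ V : X → ℝ, ∀ N m q, R N (orb m) q → |S m - V q| ≤ ε N := by
  choose n hn using hdense
  have hclose : ∀ {N m} q j, N ≤ j → R N (orb m) q → R N (orb m) (orb (n j q)) :=
    fun q j hj hm => (hR _).trans hm ((hR _).symm (hanti hj _ _ (hn j q)))
  have hcauchy : ∀ q, CauchySeq fun j => S (n j q) := fun q =>
    cauchySeq_of_le_tendsto_0 ε (fun a b N ha hb => by
      rw [Real.dist_eq]
      exact hS N _ _ (hclose q b hb (hanti ha _ _ (hn a q)))) hε
  choose V hV using fun q => cauchySeq_tendsto_of_complete (hcauchy q)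
  refine ⟨V, fun N m q hm => le_of_tendsto ((hV q).const_sub (S m)).abs ?_⟩
  filter_upwards [eventually_ge_atTop N] with j hj
  exact hS N m _ (hclose q j hj hm)

theorem abs_sub_le_of_approx (hR : ∀ N, Equivalence (R N)) {orb : ℕ → X}
    (hdense : ∀ N q, ∃ n, R N (orb n) q) {S ε : ℕ → ℝ} {V : X → ℝ}
    (hV : ∀ N m q, R N (orb m) q → |S m - V q| ≤ ε N) {N : ℕ} {p q : X} (h : R N p q) :
    |V p - V q| ≤ 2 * ε N := by
  obtain ⟨m, hm⟩ := hdense N p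
  have hp := hV N m p hm
  have hq := hV N m q ((hR N).trans hm h)
  rw [abs_le] at hp hq ⊢
  constructor <;> linarith

theorem sub_eq_of_approx_birkhoffSum {T : X → X} {z : X} (hdense : ∀ N q, ∃ n, R N (T^[n] z) q)
    (hT : ∀ N p q, R (N + 1) p q → R N (T p) (T q)) {F : X → ℝ} {δ ε : ℕ → ℝ}
    (hδ : Tendsto δ atTop (𝓝 0)) (hε : Tendsto ε atTop (𝓝 0))
    (hF : ∀ N p q, R N p q → |F p - F q| ≤ δ N) {V : X → ℝ}
    (hV : ∀ N m q, R N (T^[m] z) q → |birkhoffSum T F m z - V q| ≤ ε N) (p : X) :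
    V (T p) - V p = F p := by
  have hbound : ∀ N, |V (T p) - V p - F p| ≤ ε N + ε (N + 1) + δ (N + 1) := by
    intro N
    obtain ⟨m, hm⟩ := hdense (N + 1) p
    have h1 := hV N (m + 1) (T p) (by rw [Function.iterate_succ_apply']; exact hT N _ _ hm)
    have h2 := hV (N + 1) m p hm
    have h3 := hF (N + 1) _ _ hm
    rw [birkhoffSum_succ] at h1
    rw [abs_le] at h1 h2 h3 ⊢
    constructor <;> linarith
  have hlim : Tendsto (fun N => ε N + ε (N + 1) + δ (N + 1)) atTop (𝓝 0) := by
    simpa using (hε.add (hε.comp (tendsto_add_atTop_nat 1))).add (hδ.comp (tendsto_add_atTop_nat 1))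
  exact sub_eq_zero.mp (abs_nonpos_iff.mp (ge_of_tendsto' hlim hbound))

theorem eq_of_comp_eq_of_dense_orbit {T : X → X} {z : X}
    (hdense : ∀ N q, ∃ n, R N (T^[n] z) q) {G : X → ℝ} (hG : G ∘ T = G) {ε : ℕ → ℝ}
    (hε : Tendsto ε atTop (𝓝 0)) (hcont : ∀ N p q, R N p q → |G p - G q| ≤ ε N) (p : X) :
    G p = G z := by
  have hbound : ∀ N, |G p - G z| ≤ ε N := by
    intro N
    obtain ⟨m, hm⟩ := hdense N p
    rw [abs_sub_comm, ← congrFun (Function.iterate_invariant hG m) z]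
    exact hcont N _ _ hm
  exact sub_eq_zero.mp (abs_nonpos_iff.mp (ge_of_tendsto' hε hbound))

theorem comp_sub_eq_of_commute (hR : ∀ N, Equivalence (R N)) {T : X → X} {z : X}
    (hdense : ∀ N q, ∃ n, R N (T^[n] z) q) {F : X → ℝ} {ε : ℕ → ℝ}
    (hε : Tendsto ε atTop (𝓝 0)) {V : X → ℝ}
    (hV : ∀ N m q, R N (T^[m] z) q → |birkhoffSum T F m z - V q| ≤ ε N)
    (hcoh : ∀ p, V (T p) - V p = F p) {τ : X → X} (hτT : Function.Commute T τ)
    (hτR : ∀ N p q, R N p q → R N (τ p) (τ q)) (hFτ : F ∘ τ = F) (p : X) :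
    V (τ p) - V p = V (τ z) - V z := by
  refine eq_of_comp_eq_of_dense_orbit hdense (G := fun p => V (τ p) - V p) ?_
    (by simpa using hε.const_mul 4) (fun N p q h => ?_) p
  · funext p
    have h1 := hcoh (τ p)
    have h2 := hcoh p
    simp only [Function.comp_apply, hτT p] at h1 ⊢
    rw [show F (τ p) = F p from congrFun hFτ p] at h1
    linarith
  · have h1 := abs_sub_le_of_approx hR hdense hV (hτR N p q h)
    have h2 := abs_sub_le_of_approx hR hdense hV h
    rw [abs_le] at h1 h2 ⊢
    constructor <;> linarith

end DenseOrbit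

namespace SFT

variable {k : ℕ} {A : Fin k → Fin k → Bool}

theorem ext {x y : SFT A} (h : ∀ i, x.1 i = y.1 i) : x = y :=
  Subtype.ext (funext h)

theorem shift_iterate_val (x : SFT A) (n : ℕ) (i : ℤ) : (shift^[n] x).1 i = x.1 (i + n) := by
  induction n generalizing i with
  | zero => simp
  | succ m ih =>
    rw [Function.iterate_succ_apply']
    change (shift^[m] x).1 (i + 1) = _
    rw [ih]
    push_cast
    ring_nf

def Agree (N : ℕ) (x y : SFT A) : Prop :=
  ∀ i : ℤ, |i| ≤ N → x.1 i = y.1 i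

theorem Agree.shift {N : ℕ} {x y : SFT A} (h : Agree (N + 1) x y) : Agree N (shift x) (shift y) :=
  fun i hi => h (i + 1) (by rw [abs_le] at hi ⊢; push_cast; constructor <;> linarith)

theorem Agree.val_zero {N : ℕ} {x y : SFT A} (h : Agree N x y) : x.1 0 = y.1 0 :=
  h 0 (by simp)

theorem bddAbove_agree {x y : SFT A} (h : x ≠ y) :
    BddAbove {n : ℕ | ∀ i : ℤ, |i| < (n : ℤ) → x.1 i = y.1 i} := by
  obtain ⟨i, hi⟩ : ∃ i, x.1 i ≠ y.1 i := by
    by_contra! hc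
    exact h (ext hc)
  refine ⟨i.natAbs, fun n hn => ?_⟩
  by_contra! hlt
  exact hi (hn i (by rw [Int.abs_eq_natAbs]; exact_mod_cast hlt))

theorem agree_of_lt_sep {x y : SFT A} (h : x ≠ y) {N : ℕ} (hN : N < sep x y) : Agree N x y := by
  have hsep : sep x y ∈ {n : ℕ | ∀ i : ℤ, |i| < (n : ℤ) → x.1 i = y.1 i} :=
    Nat.sSup_mem ⟨0, fun i hi => absurd hi (by simp)⟩ (bddAbove_agree h)
  exact fun i hi => hsep i (by omega)

theorem lt_sep_of_agree {x y : SFT A} (h : x ≠ y) {N : ℕ} (hN : Agree N x y) : N < sep x y :=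
  le_csSup (bddAbove_agree h) fun i hi => hN i (by omega)

theorem dSFT_rpow_of_ne (θ : ℝ) {x y : SFT A} (h : x ≠ y) :
    dSFT x y ^ θ = ((2 : ℝ) ^ (-θ)) ^ sep x y := by
  rw [dSFT, if_neg h, ← Real.rpow_intCast, ← Real.rpow_natCast, ← Real.rpow_mul two_pos.le,
    ← Real.rpow_mul two_pos.le]
  push_cast
  ring_nf

theorem dSFT_rpow_le_of_agree {θ : ℝ} (hθ : 0 < θ) {N : ℕ} {x y : SFT A} (h : Agree N x y) :
    dSFT x y ^ θ ≤ ((2 : ℝ) ^ (-θ)) ^ (N + 1) := by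
  by_cases hxy : x = y
  · subst hxy
    rw [dSFT, if_pos rfl, Real.zero_rpow hθ.ne']
    positivity
  · rw [dSFT_rpow_of_ne θ hxy]
    exact pow_le_pow_of_le_one (by positivity)
      (Real.rpow_le_one_of_one_le_of_nonpos one_le_two (by linarith)) (lt_sep_of_agree hxy h)

theorem agree_of_dSFT_lt {N : ℕ} {x y : SFT A} (h : dSFT x y < (2 : ℝ) ^ (-(N : ℤ))) :
    Agree N x y := by
  by_cases hxy : x = y
  · subst hxy
    exact fun _ _ => rfl
  · rw [dSFT, if_neg hxy, zpow_lt_zpow_iff_right₀ one_lt_two] at h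
    exact agree_of_lt_sep hxy (by omega)

theorem abs_sub_le_of_agree {f : SFT A → ℝ} {θ C : ℝ} (hθ : 0 < θ) (hC : 0 ≤ C)
    (hf : ∀ x y, |f x - f y| ≤ C * dSFT x y ^ θ) {N : ℕ} {x y : SFT A} (h : Agree N x y) :
    |f x - f y| ≤ C * ((2 : ℝ) ^ (-θ)) ^ (N + 1) :=
  (hf x y).trans (mul_le_mul_of_nonneg_left (dSFT_rpow_le_of_agree hθ h) hC)

theorem exists_abs_le_of_abs_sub_le {u : SFT A → ℝ} {c : ℝ}
    (h : ∀ x y : SFT A, x.1 0 = y.1 0 → |u x - u y| ≤ c) : ∃ M, ∀ x, |u x| ≤ M := by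
  have hcyl : ∀ a : Fin k, ∃ M, ∀ x : SFT A, x.1 0 = a → |u x| ≤ M := by
    intro a
    by_cases ha : ∃ w : SFT A, w.1 0 = a
    · obtain ⟨w, rfl⟩ := ha
      refine ⟨|u w| + c, fun x hx => ?_⟩
      linarith [h x w hx, abs_sub_abs_le_abs_sub (u x) (u w)]
    · exact ⟨0, fun x hx => (ha ⟨x, hx⟩).elim⟩
  choose M hM using hcyl
  obtain ⟨B, hB⟩ := (Set.finite_range M).bddAbove
  exact ⟨B, fun x => (hM _ x rfl).trans (hB ⟨_, rfl⟩)⟩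

theorem exists_holder_of_agree {u : SFT A → ℝ} {θ c : ℝ} (hθ : 0 < θ)
    (h : ∀ N x y, Agree N x y → |u x - u y| ≤ c * ((2 : ℝ) ^ (-θ)) ^ (N + 1)) :
    ∃ C', 0 ≤ C' ∧ ∀ x y, |u x - u y| ≤ C' * dSFT x y ^ θ := by
  obtain ⟨M, hM⟩ := exists_abs_le_of_abs_sub_le fun x y hxy =>
    h 0 x y fun i hi => by
      obtain rfl : i = 0 := abs_nonpos_iff.mp (by exact_mod_cast hi)
      exact hxy
  refine ⟨|c| + 2 * |M|, by positivity, fun x y => ?_⟩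
  by_cases hxy : x = y
  · subst hxy
    simp [dSFT, Real.zero_rpow hθ.ne']
  rw [dSFT_rpow_of_ne θ hxy]
  rcases hs : sep x y with _ | N
  · rw [pow_zero, mul_one]
    linarith [hM x, hM y, abs_sub (u x) (u y), le_abs_self M, abs_nonneg c]
  · calc |u x - u y| ≤ c * ((2 : ℝ) ^ (-θ)) ^ (N + 1) := h N x y (agree_of_lt_sep hxy (by omega))
      _ ≤ (|c| + 2 * |M|) * ((2 : ℝ) ^ (-θ)) ^ (N + 1) :=
        mul_le_mul_of_nonneg_right (by linarith [le_abs_self c, abs_nonneg M]) (by positivity)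

def periodize (x : SFT A) (p : ℕ) (h : x.1 0 = x.1 p) : SFT A :=
  ⟨fun j => x.1 (j % p), fun j => by
    change A (x.1 (j % p)) (x.1 ((j + 1) % p)) = true
    rw [← Int.emod_add_emod]
    rcases Nat.eq_zero_or_pos p with rfl | hp
    · simpa using x.2 j
    have h0 : 0 ≤ j % p := Int.emod_nonneg _ (by omega)
    have h1 : j % p < p := Int.emod_lt_of_pos _ (by omega)
    rcases (show j % p + 1 < p ∨ j % p + 1 = p by omega) with hlt | heq
    · rw [Int.emod_eq_of_lt (by omega) hlt]
      exact x.2 _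
    · have hstep := x.2 (j % p)
      rw [heq, ← h] at hstep
      rwa [heq, Int.emod_self]⟩

theorem shift_iterate_periodize (x : SFT A) (p : ℕ) (h : x.1 0 = x.1 p) :
    shift^[p] (periodize x p h) = periodize x p h :=
  ext fun i => by
    rw [shift_iterate_val]
    exact congrArg x.1 Int.emod_eq_add_self_emod.symm

theorem val_emod_eq_of_agree_shift_iterate {N p : ℕ} {x : SFT A} (hx : Agree N x (shift^[p] x))
    {l : ℤ} (hl : -N ≤ l) (hl' : l < p + N) : x.1 (l % p) = x.1 l := by
  rcases Nat.eq_zero_or_pos p with rfl | hp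
  · simp
  have step : ∀ i : ℤ, |i| ≤ N → x.1 i = x.1 (i + p) :=
    fun i hi => (hx i hi).trans (shift_iterate_val x p i)
  induction hn : l.natAbs using Nat.strong_induction_on generalizing l with
  | _ n ih =>
    by_cases hl0 : l < 0
    · have hback : x.1 ((l + p) % p) = x.1 (l + p) := by
        by_cases hlp : l + p < 0
        · exact ih _ (by omega) (by omega) (by omega) rfl
        · exact congrArg x.1 (Int.emod_eq_of_lt (by omega) (by omega))
      rw [Int.emod_eq_add_self_emod, hback, step l (abs_le.mpr ⟨by omega, by omega⟩)]
    by_cases hlp : l < p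
    · rw [Int.emod_eq_of_lt (by omega) hlp]
    · have hback : x.1 ((l - p) % p) = x.1 (l - p) := ih _ (by omega) (by omega) (by omega) rfl
      rw [Int.sub_emod_right] at hback
      rw [hback, step (l - p) (abs_le.mpr ⟨by omega, by omega⟩), sub_add_cancel]

theorem agree_shift_iterate_periodize {N p j : ℕ} {x : SFT A} (hx : Agree N x (shift^[p] x))
    (h : x.1 0 = x.1 p) (hj : j < p) :
    Agree (N + min j (p - 1 - j)) (shift^[j] x) (shift^[j] (periodize x p h)) := by
  intro i hi
  obtain ⟨hi₁, hi₂⟩ := abs_le.mp hi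
  rw [shift_iterate_val, shift_iterate_val]
  exact (val_emod_eq_of_agree_shift_iterate hx (by omega) (by omega)).symm

theorem coc_congr {M : Type*} [Monoid M] {ψ : SFT A → M}
    (hψ : ∀ x y : SFT A, x.1 0 = y.1 0 → ψ x = ψ y) {n : ℕ} {x y : SFT A}
    (h : ∀ j : ℕ, j < n → x.1 j = y.1 j) : coc shift ψ n x = coc shift ψ n y := by
  induction n with
  | zero => rfl
  | succ m ih =>
    have hm : (shift^[m] x).1 0 = (shift^[m] y).1 0 := by
      simpa [shift_iterate_val] using h m (by omega)
    rw [coc, coc, ih fun j hj => h j (by omega), hψ _ _ hm]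

/-- Shadowing by the periodic point `periodize x p`, whose Birkhoff sum vanishes: the two
orbits agree on a block that is longest in the middle of the segment, so the differences of the
summands are bounded by a two-sided geometric series. -/
theorem abs_birkhoffSum_le_of_agree_shift_iterate {M : Type*} [Monoid M] {ψ : SFT A → M}
    (hψ : ∀ x y : SFT A, x.1 0 = y.1 0 → ψ x = ψ y) {θ C : ℝ} (hθ : 0 < θ) (hC : 0 ≤ C)
    {f : SFT A → ℝ} (hf : ∀ x y, |f x - f y| ≤ C * dSFT x y ^ θ)
    (hvanish : ∀ n : ℕ, 1 ≤ n → ∀ x : SFT A,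
      shift^[n] x = x → coc shift ψ n x = 1 → birkhoffSum shift f n x = 0)
    {N p : ℕ} {x : SFT A} (hx : Agree N x (shift^[p] x)) (hcoc : coc shift ψ p x = 1) :
    |birkhoffSum shift f p x| ≤ 2 * C / (1 - (2 : ℝ) ^ (-θ)) * ((2 : ℝ) ^ (-θ)) ^ (N + 1) := by
  set r : ℝ := (2 : ℝ) ^ (-θ)
  have hr0 : 0 ≤ r := by positivity
  have hr1 : r < 1 := Real.rpow_lt_one_of_one_lt_of_neg one_lt_two (by linarith)
  rcases Nat.eq_zero_or_pos p with rfl | hp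
  · rw [birkhoffSum_zero, abs_zero]
    exact mul_nonneg (div_nonneg (by linarith) (by linarith)) (by positivity)
  have h0p : x.1 0 = x.1 p := by simpa [shift_iterate_val] using hx.val_zero
  set y := periodize x p h0p
  have hy : birkhoffSum shift f p y = 0 := by
    refine hvanish p hp y (shift_iterate_periodize x p h0p) ?_
    rw [coc_congr hψ (x := y) (y := x) fun j hj =>
      congrArg x.1 (Int.emod_eq_of_lt (by omega) (by omega))]
    exact hcoc
  have hterm : ∀ j ∈ range p,
      |f (shift^[j] x) - f (shift^[j] y)| ≤ C * r ^ (N + 1) * r ^ min j (p - 1 - j) := fun j hj =>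
    (abs_sub_le_of_agree hθ hC hf (agree_shift_iterate_periodize hx h0p (mem_range.mp hj))).trans
      (by rw [mul_assoc, ← pow_add, Nat.add_right_comm])
  calc |birkhoffSum shift f p x|
      = |∑ j ∈ range p, (f (shift^[j] x) - f (shift^[j] y))| := by
        simp only [birkhoffSum] at hy ⊢
        rw [sum_sub_distrib, hy, sub_zero]
    _ ≤ ∑ j ∈ range p, C * r ^ (N + 1) * r ^ min j (p - 1 - j) :=
        (abs_sum_le_sum_abs _ _).trans (sum_le_sum hterm)
    _ ≤ C * r ^ (N + 1) * (2 / (1 - r)) := by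
        rw [← mul_sum]
        exact mul_le_mul_of_nonneg_left (sum_range_pow_min_le hr0 hr1 p) (by positivity)
    _ = 2 * C / (1 - r) * r ^ (N + 1) := by ring

end SFT

section SkewProduct

variable {k : ℕ} {A : Fin k → Fin k → Bool} {Γ : Type*}

def FiberAgree (N : ℕ) (p q : SFT A × Γ) : Prop :=
  p.2 = q.2 ∧ SFT.Agree N p.1 q.1

theorem fiberAgree_equivalence (N : ℕ) : Equivalence (FiberAgree (A := A) (Γ := Γ) N) where
  refl _ := ⟨rfl, fun _ _ => rfl⟩
  symm h := ⟨h.1.symm, fun i hi => (h.2 i hi).symm⟩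
  trans h h' := ⟨h.1.trans h'.1, fun i hi => (h.2 i hi).trans (h'.2 i hi)⟩

theorem antitone_fiberAgree : Antitone (FiberAgree (A := A) (Γ := Γ)) :=
  fun _ _ hNM _ _ h => ⟨h.1, fun i hi => h.2 i (hi.trans (by exact_mod_cast hNM))⟩

theorem fiberAgree_of_dHat_lt {N : ℕ} {p q : SFT A × Γ} (h : dHat p q < (2 : ℝ) ^ (-(N : ℤ))) :
    FiberAgree N p q := by
  unfold dHat at h
  split_ifs at h with hpq
  · exact ⟨hpq, SFT.agree_of_dSFT_lt h⟩
  · exact absurd h (not_lt.mpr (zpow_le_one_of_nonpos₀ one_le_two (by omega)))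

theorem FiberAgree.mul_right {N : ℕ} {p q : SFT A × Γ} [Mul Γ] (h : FiberAgree N p q) (δ : Γ) :
    FiberAgree N (p.1, p.2 * δ) (q.1, q.2 * δ) :=
  ⟨congrArg (· * δ) h.1, h.2⟩

variable [Group Γ]

theorem FiberAgree.map_skewProd {ψ : SFT A → Γ} (hψ : ∀ x y : SFT A, x.1 0 = y.1 0 → ψ x = ψ y)
    {N : ℕ} {p q : SFT A × Γ} (h : FiberAgree (N + 1) p q) :
    FiberAgree N (skewProd shift ψ p) (skewProd shift ψ q) :=
  ⟨by rw [skewProd, skewProd, hψ _ _ h.2.val_zero, h.1], h.2.shift⟩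

theorem abs_birkhoffSum_sub_le_of_fiberAgree {ψ : SFT A → Γ}
    (hψ : ∀ x y : SFT A, x.1 0 = y.1 0 → ψ x = ψ y) {θ C : ℝ} (hθ : 0 < θ) (hC : 0 ≤ C)
    {f : SFT A → ℝ} (hf : ∀ x y, |f x - f y| ≤ C * dSFT x y ^ θ)
    (hvanish : ∀ n : ℕ, 1 ≤ n → ∀ x : SFT A,
      shift^[n] x = x → coc shift ψ n x = 1 → birkhoffSum shift f n x = 0)
    (z : SFT A × Γ) {N m n : ℕ}
    (h : FiberAgree N ((skewProd shift ψ)^[m] z) ((skewProd shift ψ)^[n] z)) :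
    |birkhoffSum (skewProd shift ψ) (f ∘ Prod.fst) m z
        - birkhoffSum (skewProd shift ψ) (f ∘ Prod.fst) n z|
      ≤ 2 * C / (1 - (2 : ℝ) ^ (-θ)) * ((2 : ℝ) ^ (-θ)) ^ (N + 1) := by
  wlog hmn : m ≤ n generalizing m n
  · rw [abs_sub_comm]
    exact this ((fiberAgree_equivalence N).symm h) (le_of_not_ge hmn)
  obtain ⟨p, rfl⟩ := Nat.exists_eq_add_of_le hmn
  rw [add_comm m p, Function.iterate_add_apply] at h
  set q := (skewProd shift ψ)^[m] z
  rw [skewProd_iterate] at h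
  rw [birkhoffSum_add, sub_add_cancel_left, abs_neg, birkhoffSum_skewProd_comp_fst]
  exact SFT.abs_birkhoffSum_le_of_agree_shift_iterate hψ hθ hC hf hvanish h.2
    (mul_eq_right.mp h.1.symm)

theorem exists_cohomologous_of_fiber_translation {X : Type*} {σ : X → X} {ψ : X → Γ}
    {f : X → ℝ} {V : X × Γ → ℝ} (p₀ : X × Γ) (hcoh : ∀ p, V (skewProd σ ψ p) - V p = f p.1)
    (htransl : ∀ δ p, V (p.1, p.2 * δ) - V p = V (p₀.1, p₀.2 * δ) - V p₀) :
    ∃ α : Γ → ℝ, (α 1 = 0 ∧ ∀ a b, α (a * b) = α a + α b) ∧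
      ∀ x, f x = V (σ x, 1) - V (x, 1) + α (ψ x) := by
  refine ⟨fun δ => V (p₀.1, p₀.2 * δ) - V p₀, ⟨by simp, fun a b => ?_⟩, fun x => ?_⟩
  · have := htransl b (p₀.1, p₀.2 * a)
    simp only [mul_assoc] at this
    linarith
  · have h1 := hcoh (x, 1)
    have h2 := htransl (ψ x) (σ x, 1)
    simp only [skewProd, mul_one, one_mul] at h1 h2
    linarith

end SkewProduct

theorem abelian_livsic_subshift_general {k : ℕ} (A : Fin k → Fin k → Bool)
    (Γ : Type*) [Group Γ]
    (ψ : SFT A → Γ) (hψ : ∀ x y : SFT A, x.1 0 = y.1 0 → ψ x = ψ y)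
    (z : SFT A × Γ)
    (htrans : ∀ p : SFT A × Γ, ∀ ε > 0, ∃ n : ℕ,
      dHat ((skewProd shift ψ)^[n] z) p < ε)
    (θ C : ℝ) (hθ : 0 < θ) (hC : 0 ≤ C)
    (f : SFT A → ℝ)
    (hf : ∀ x y : SFT A, |f x - f y| ≤ C * dSFT x y ^ θ)
    (hvanish : ∀ n : ℕ, 1 ≤ n → ∀ x : SFT A,
      shift^[n] x = x → coc shift ψ n x = 1 →
        ∑ i ∈ Finset.range n, f (shift^[i] x) = 0) :
    ∃ (u : SFT A → ℝ) (α : Γ → ℝ),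
      (∃ C' θ' : ℝ, 0 ≤ C' ∧ 0 < θ' ∧
        ∀ x y : SFT A, |u x - u y| ≤ C' * dSFT x y ^ θ') ∧
      (α 1 = 0 ∧ ∀ a b : Γ, α (a * b) = α a + α b) ∧
      ∀ x : SFT A, f x = u (shift x) - u x + α (ψ x) := by
  set r : ℝ := (2 : ℝ) ^ (-θ)
  have hgeom (c : ℝ) : Tendsto (fun N : ℕ => c * r ^ (N + 1)) atTop (𝓝 0) := by
    simpa using ((tendsto_pow_atTop_nhds_zero_of_lt_one (by positivity)
      (Real.rpow_lt_one_of_one_lt_of_neg one_lt_two (by linarith))).comp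
        (tendsto_add_atTop_nat 1)).const_mul c
  have hdense : ∀ N q, ∃ n, FiberAgree N ((skewProd shift ψ)^[n] z) q := fun N q =>
    (htrans q _ (by positivity)).imp fun _ hn => fiberAgree_of_dHat_lt hn
  obtain ⟨V, hV⟩ := exists_limit_along_dense_orbit fiberAgree_equivalence antitone_fiberAgree
    hdense (hgeom _) fun N m n h => abs_birkhoffSum_sub_le_of_fiberAgree hψ hθ hC hf hvanish z h
  have hcoh := sub_eq_of_approx_birkhoffSum hdense (fun N p q => FiberAgree.map_skewProd hψ)
    (hgeom C) (hgeom _) (fun N p q h => SFT.abs_sub_le_of_agree hθ hC hf h.2) hV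
  obtain ⟨α, hα, hcohα⟩ := exists_cohomologous_of_fiber_translation z hcoh fun δ =>
    comp_sub_eq_of_commute fiberAgree_equivalence hdense (hgeom _) hV hcoh
      (fun p => by simp [skewProd, mul_assoc]) (fun N p q h => h.mul_right δ) rfl
  obtain ⟨C', hC', hu⟩ := SFT.exists_holder_of_agree (u := fun x => V (x, 1)) hθ fun N x y h =>
    (abs_sub_le_of_approx fiberAgree_equivalence hdense hV (p := (x, 1)) (q := (y, 1))
      ⟨rfl, h⟩).trans_eq (mul_assoc _ _ _).symm
  exact ⟨fun x => V (x, 1), α, ⟨C', θ, hC', hθ, hu⟩, hα, hcohα⟩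

/-- abelian Livšic theorem for subshifts: if the skew product
`T_ψ` over a transitive subshift of finite type is transitive and the θ-Hölder
function `f` has vanishing Birkhoff sums over all periodic points with trivial
`ψ`-cocycle, then `f(x) = u(σx) − u(x) + α(ψ(x))` for some Hölder continuous `u`
and some homomorphism `α : Γ → ℝ`. -/
theorem abelian_livsic_subshift {k : ℕ} (A : Fin k → Fin k → Bool)
    (hirr : ∀ i j : Fin k, ∃ n : ℕ, 1 ≤ n ∧ ∃ c : ℕ → Fin k,
      c 0 = i ∧ c n = j ∧ ∀ l < n, A (c l) (c (l + 1)) = true)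
    (Γ : Type*) [Group Γ] [Countable Γ]
    (ψ : SFT A → Γ) (hψ : ∀ x y : SFT A, x.1 0 = y.1 0 → ψ x = ψ y)
    (z : SFT A × Γ)
    (htrans : ∀ p : SFT A × Γ, ∀ ε > 0, ∃ n : ℕ,
      dHat ((skewProd shift ψ)^[n] z) p < ε)
    (θ C : ℝ) (hθ : 0 < θ) (hθ1 : θ ≤ 1) (hC : 0 ≤ C)
    (f : SFT A → ℝ)
    (hf : ∀ x y : SFT A, |f x - f y| ≤ C * dSFT x y ^ θ)
    (hvanish : ∀ n : ℕ, 1 ≤ n → ∀ x : SFT A,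
      shift^[n] x = x → coc shift ψ n x = 1 →
        ∑ i ∈ Finset.range n, f (shift^[i] x) = 0) :
    ∃ (u : SFT A → ℝ) (α : Γ → ℝ),
      (∃ C' θ' : ℝ, 0 ≤ C' ∧ 0 < θ' ∧
        ∀ x y : SFT A, |u x - u y| ≤ C' * dSFT x y ^ θ') ∧
      (α 1 = 0 ∧ ∀ a b : Γ, α (a * b) = α a + α b) ∧
      ∀ x : SFT A, f x = u (shift x) - u x + α (ψ x) :=
  abelian_livsic_subshift_general A Γ ψ hψ z htrans θ C hθ hC f hf hvanish
end
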